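/- Every finite simplicial complex has a core, and the core is unique up to simplicial isomorphism. Moreover, two finite simplicial complexes have the same strong homotopy type if and only if their cores are isomorphic. -/

import Mathlib

/- Theory of strong homotopy types of finite simplicial complexes
   (Barmak–Minian), basic definitions. -/

open Classical

namespace StrongHomotopy

/-- A finite abstract simplicial complex with vertices from the ambient type `V`:
a finite family of nonempty finite subsets of `V`, closed under nonempty subsets.
(All singletons of vertices actually used are faces, by downward closure.) -/
structure Cplx (V : Type) where
  faces : Finset (Finset V)
  nonempty_of_mem : ∀ ⦃σ : Finset V⦄, σ ∈ faces → σ.Nonempty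
  down_closed : ∀ ⦃σ τ : Finset V⦄, σ ∈ faces → τ ⊆ σ → τ.Nonempty → τ ∈ faces

variable {V W : Type}

/-- `v` is a vertex of `K`. -/
def IsVertex (K : Cplx V) (v : V) : Prop := {v} ∈ K.faces

noncomputable section

/-- The set of faces of the link of `v` in `K`. -/
def link (K : Cplx V) (v : V) : Finset (Finset V) :=
  K.faces.filter fun σ => v ∉ σ ∧ insert v σ ∈ K.faces

/-- A family of faces is a simplicial cone with apex `a`. -/
def IsConeWithApex (F : Finset (Finset V)) (a : V) : Prop :=
  {a} ∈ F ∧ ∀ σ ∈ F, insert a σ ∈ F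

/-- A family of faces is a simplicial cone. -/
def IsCone (F : Finset (Finset V)) : Prop := ∃ a, IsConeWithApex F a

/-- `v` is dominated by `v'` in `K`: the link of `v` is a cone with apex `v'`. -/
def DominatedBy (K : Cplx V) (v v' : V) : Prop := IsConeWithApex (link K v) v'

/-- `v` is a dominated vertex of `K`: its link is a simplicial cone. -/
def Dominated (K : Cplx V) (v : V) : Prop := IsCone (link K v)

/-- Deletion `K ∖ v`: the full subcomplex spanned by the vertices other than `v`. -/
def delete (K : Cplx V) (v : V) : Cplx V where
  faces := K.faces.filter fun σ => v ∉ σ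
  nonempty_of_mem := fun σ h => K.nonempty_of_mem (Finset.mem_filter.mp h).1
  down_closed := by
    intro σ τ hσ hsub hne
    rw [Finset.mem_filter] at hσ ⊢
    exact ⟨K.down_closed hσ.1 hsub hne, fun hv => hσ.2 (hsub hv)⟩

/-- The link of a vertex, as a simplicial complex. -/
def linkCplx (K : Cplx V) (v : V) : Cplx V where
  faces := link K v
  nonempty_of_mem := fun σ h => K.nonempty_of_mem (Finset.mem_filter.mp h).1
  down_closed := by
    intro σ τ hσ hsub hne
    simp only [link, Finset.mem_filter] at hσ ⊢
    refine ⟨K.down_closed hσ.1 hsub hne, fun hv => hσ.2.1 (hsub hv), ?_⟩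
    exact K.down_closed hσ.2.2 (Finset.insert_subset_insert v hsub)
      ⟨v, Finset.mem_insert_self v τ⟩

/-- Elementary strong collapse: deletion of a dominated vertex. -/
def ElemStrongCollapse (K L : Cplx V) : Prop := ∃ v, Dominated K v ∧ L = delete K v

/-- `K` strong collapses to `L` (a sequence of elementary strong collapses). -/
def StrongCollapses : Cplx V → Cplx V → Prop := Relation.ReflTransGen ElemStrongCollapse

/-- The complex with a single vertex `v`. -/
def pt (v : V) : Cplx V where
  faces := {{v}}
  nonempty_of_mem := by
    intro σ h
    rw [Finset.mem_singleton] at h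
    subst h
    exact ⟨v, Finset.mem_singleton_self v⟩
  down_closed := by
    intro σ τ hσ hsub hne
    rw [Finset.mem_singleton] at hσ ⊢
    subst hσ
    rcases Finset.subset_singleton_iff.mp hsub with h | h
    · exact absurd h (Finset.nonempty_iff_ne_empty.mp hne)
    · exact h

/-- `K` is strong collapsible: it strong collapses to a single vertex. -/
def StrongCollapsible (K : Cplx V) : Prop := ∃ v, StrongCollapses K (pt v)

/-- A minimal complex: no dominated vertices. -/
def MinimalCplx (K : Cplx V) : Prop := ∀ v, ¬ Dominated K v

/-- A vertex map is simplicial if it sends faces to faces. -/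
def IsSimplicial (K : Cplx V) (L : Cplx W) (f : V → W) : Prop :=
  ∀ σ ∈ K.faces, σ.image f ∈ L.faces

/-- Two vertex maps are contiguous. -/
def Contiguous (K : Cplx V) (L : Cplx W) (f g : V → W) : Prop :=
  ∀ σ ∈ K.faces, σ.image f ∪ σ.image g ∈ L.faces

/-- `f` and `g` lie in the same contiguity class: they are joined by
a finite chain of (pairwise contiguous) maps. -/
def ContigClass (K : Cplx V) (L : Cplx W) : (V → W) → (V → W) → Prop :=
  Relation.ReflTransGen (Contiguous K L)

/-- A strong equivalence of simplicial complexes. -/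
def StrongEquiv (K : Cplx V) (L : Cplx W) (f : V → W) : Prop :=
  IsSimplicial K L f ∧ ∃ g : W → V, IsSimplicial L K g ∧
    ContigClass K K (g ∘ f) id ∧ ContigClass L L (f ∘ g) id

/-- `f` is a simplicial isomorphism from `K` to `L`: a simplicial map,
injective on vertices, inducing a bijection on faces. -/
def IsIsoMap (K : Cplx V) (L : Cplx W) (f : V → W) : Prop :=
  IsSimplicial K L f ∧ Set.InjOn f {v | IsVertex K v} ∧
    K.faces.image (fun σ => σ.image f) = L.faces

/-- `K` and `L` are simplicially isomorphic. -/
def Isomorphic (K : Cplx V) (L : Cplx W) : Prop := ∃ f, IsIsoMap K L f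

/-- `L` is a subcomplex of `K`. -/
def Subcplx (L K : Cplx V) : Prop := L.faces ⊆ K.faces

/-- `L` is a full subcomplex of `K`. -/
def IsFullSub (L K : Cplx V) : Prop :=
  L.faces ⊆ K.faces ∧ ∀ σ ∈ K.faces, (∀ v ∈ σ, IsVertex L v) → σ ∈ L.faces

/-- `K₀` is a core of `K`: a minimal complex to which `K` strong collapses. -/
def IsCore (K K₀ : Cplx V) : Prop := MinimalCplx K₀ ∧ StrongCollapses K K₀

/-- Same strong homotopy type: joined by a finite sequence of strong collapses,
strong expansions and simplicial isomorphisms. (In the abstract setting, where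
new vertices may be created freely, isomorphisms are generated by collapses and
expansions; over a fixed ambient vertex type they must be added as moves.) -/
def SameSHT (K L : Cplx V) : Prop :=
  Relation.ReflTransGen
    (fun A B => ElemStrongCollapse A B ∨ ElemStrongCollapse B A ∨ Isomorphic A B) K L

/-- `K` is vertex-homogeneous: its automorphism group acts transitively on vertices. -/
def VertexHomog (K : Cplx V) : Prop :=
  ∀ v w, IsVertex K v → IsVertex K w → ∃ φ : V → V, IsIsoMap K K φ ∧ φ v = w

/-! ### The nerve -/

/-- The maximal faces of `K`. -/
def maxFaces (K : Cplx V) : Finset (Finset V) :=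
  K.faces.filter fun σ => ∀ τ ∈ K.faces, σ ⊆ τ → σ = τ

/-- The nerve of `K`: vertices are the maximal simplices of `K`; a nonempty set
of maximal simplices is a face iff the simplices have a common vertex. -/
def nerve (K : Cplx V) : Cplx (Finset V) where
  faces := (maxFaces K).powerset.filter fun S => S.Nonempty ∧ ∃ v, ∀ σ ∈ S, v ∈ σ
  nonempty_of_mem := fun S h => (Finset.mem_filter.mp h).2.1
  down_closed := by
    intro S T hS hsub hne
    rw [Finset.mem_filter, Finset.mem_powerset] at hS ⊢
    obtain ⟨hpow, -, v, hv⟩ := hS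
    exact ⟨hsub.trans hpow, hne, v, fun σ hσ => hv σ (hsub hσ)⟩

/-- Iterated ambient vertex types for iterated nerves. -/
def iterV (V : Type) : ℕ → Type := fun n => Nat.rec V (fun _ T => Finset T) n

/-- The iterated nerve `Nⁿ(K)` (with `N⁰(K) = K`). -/
def iterNerve (K : Cplx V) : (n : ℕ) → Cplx (iterV V n)
  | 0 => K
  | n + 1 => nerve (iterNerve K n)

/-- A complex consists of a single vertex. -/
def IsPoint (K : Cplx V) : Prop := ∃ v, K.faces = {{v}}

/-! ### Joins -/

/-- The left part of a set of vertices of `V ⊕ W`. -/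
def lefts (ρ : Finset (V ⊕ W)) : Finset V :=
  ρ.preimage Sum.inl Sum.inl_injective.injOn

/-- The right part of a set of vertices of `V ⊕ W`. -/
def rights (ρ : Finset (V ⊕ W)) : Finset W :=
  ρ.preimage Sum.inr Sum.inr_injective.injOn

lemma lefts_union_rights (ρ : Finset (V ⊕ W)) :
    (lefts ρ).image Sum.inl ∪ (rights ρ).image Sum.inr = ρ := by
  ext x
  cases x with
  | inl v => simp [lefts, rights]
  | inr w => simp [lefts, rights]

lemma lefts_eq (σ : Finset V) (τ : Finset W) :
    lefts (σ.image Sum.inl ∪ τ.image Sum.inr) = σ := by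
  ext v; simp [lefts]

lemma rights_eq (σ : Finset V) (τ : Finset W) :
    rights (σ.image Sum.inl ∪ τ.image Sum.inr) = τ := by
  ext w; simp [rights]

/-- The faces of the join `K * L`. -/
def joinFaces (K : Cplx V) (L : Cplx W) : Finset (Finset (V ⊕ W)) :=
  (((insert ∅ K.faces) ×ˢ (insert ∅ L.faces)).image
    (fun p => p.1.image Sum.inl ∪ p.2.image Sum.inr)).erase ∅

lemma mem_joinFaces {K : Cplx V} {L : Cplx W} {ρ : Finset (V ⊕ W)} :
    ρ ∈ joinFaces K L ↔
      ρ.Nonempty ∧ lefts ρ ∈ insert ∅ K.faces ∧ rights ρ ∈ insert ∅ L.faces := by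
  unfold joinFaces
  constructor
  · intro h
    have hne : ρ ≠ ∅ := Finset.ne_of_mem_erase h
    have h' := Finset.mem_of_mem_erase h
    rw [Finset.mem_image] at h'
    obtain ⟨p, hp, hρ⟩ := h'
    rw [Finset.mem_product] at hp
    subst hρ
    rw [lefts_eq, rights_eq]
    exact ⟨Finset.nonempty_iff_ne_empty.mpr hne, hp.1, hp.2⟩
  · rintro ⟨hne, hl, hr⟩
    apply Finset.mem_erase.mpr
    refine ⟨Finset.nonempty_iff_ne_empty.mp hne, ?_⟩
    rw [Finset.mem_image]
    exact ⟨(lefts ρ, rights ρ), Finset.mem_product.mpr ⟨hl, hr⟩, lefts_union_rights ρ⟩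

/-- The simplicial join `K * L` of complexes with disjoint vertex sets
(realized on the disjoint sum of the ambient types). -/
def join (K : Cplx V) (L : Cplx W) : Cplx (V ⊕ W) where
  faces := joinFaces K L
  nonempty_of_mem := fun ρ h => (mem_joinFaces.mp h).1
  down_closed := by
    intro ρ ρ' hρ hsub hne
    obtain ⟨-, hl, hr⟩ := mem_joinFaces.mp hρ
    apply mem_joinFaces.mpr
    refine ⟨hne, ?_, ?_⟩
    · rcases Finset.eq_empty_or_nonempty (lefts ρ') with h0 | h1
      · rw [h0]; exact Finset.mem_insert_self _ _
      · have hsubl : lefts ρ' ⊆ lefts ρ := by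
          intro v hv
          simp only [lefts, Finset.mem_preimage] at hv ⊢
          exact hsub hv
        have hKf : lefts ρ ∈ K.faces := by
          rcases Finset.mem_insert.mp hl with h | h
          · obtain ⟨v, hv⟩ := h1
            exact absurd (hsubl hv) (by simp [h])
          · exact h
        exact Finset.mem_insert.mpr (Or.inr (K.down_closed hKf hsubl h1))
    · rcases Finset.eq_empty_or_nonempty (rights ρ') with h0 | h1
      · rw [h0]; exact Finset.mem_insert_self _ _
      · have hsubr : rights ρ' ⊆ rights ρ := by
          intro w hw
          simp only [rights, Finset.mem_preimage] at hw ⊢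
          exact hsub hw
        have hLf : rights ρ ∈ L.faces := by
          rcases Finset.mem_insert.mp hr with h | h
          · obtain ⟨w, hw⟩ := h1
            exact absurd (hsubr hw) (by simp [h])
          · exact h
        exact Finset.mem_insert.mpr (Or.inr (L.down_closed hLf hsubr h1))

/-! ### Finite posets (finite T₀-spaces) -/

variable {P : Type} [PartialOrder P]

/-- `x` is a beat point of the finite poset `X`: the points of `X` strictly below
`x` have a maximum, or the points of `X` strictly above `x` have a minimum. -/
def BeatPoint (X : Finset P) (x : P) : Prop :=
  x ∈ X ∧ ((∃ y ∈ X, y < x ∧ ∀ z ∈ X, z < x → z ≤ y) ∨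
    (∃ y ∈ X, x < y ∧ ∀ z ∈ X, x < z → y ≤ z))

/-- Elementary strong collapse of finite posets: removal of a beat point. -/
def ElemPosetStrongCollapse (X Y : Finset P) : Prop :=
  ∃ x, BeatPoint X x ∧ Y = X.erase x

/-- Strong collapse of finite posets: successive removal of beat points. -/
def PosetStrongCollapses : Finset P → Finset P → Prop :=
  Relation.ReflTransGen ElemPosetStrongCollapse

/-- A finite poset is contractible iff it strong collapses to a point (Stong). -/
def PosetContractible (X : Finset P) : Prop := ∃ x, PosetStrongCollapses X {x}

/-- The link `Ĉ_x` of `x` in `X`: the points of `X` comparable with `x` and distinct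
from it. -/
def posetLink (X : Finset P) (x : P) : Finset P :=
  X.filter fun y => y < x ∨ x < y

/-- `x` is a weak point of `X`: its link is contractible. -/
def WeakPoint (X : Finset P) (x : P) : Prop :=
  x ∈ X ∧ PosetContractible (posetLink X x)

/-- Collapse of finite posets: successive removal of weak points. -/
def PosetCollapses : Finset P → Finset P → Prop :=
  Relation.ReflTransGen (fun X Y => ∃ x, WeakPoint X x ∧ Y = X.erase x)

/-- A finite poset is collapsible if it collapses to a point. -/
def PosetCollapsible (X : Finset P) : Prop := ∃ x, PosetCollapses X {x}

/-- The order complex of a finite poset: faces are the nonempty chains. -/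
def orderCplx (X : Finset P) : Cplx P where
  faces := X.powerset.filter fun σ => σ.Nonempty ∧ IsChain (· ≤ ·) (σ : Set P)
  nonempty_of_mem := fun σ h => (Finset.mem_filter.mp h).2.1
  down_closed := by
    intro σ τ hσ hsub hne
    rw [Finset.mem_filter, Finset.mem_powerset] at hσ ⊢
    exact ⟨hsub.trans hσ.1, hne, hσ.2.2.mono (Finset.coe_subset.mpr hsub)⟩

/-- The barycentric subdivision of a complex: the order complex of its poset of
faces (the face poset, ordered by inclusion). -/
def sd (K : Cplx V) : Cplx (Finset V) := orderCplx K.faces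

/-- Homotopy of order-preserving maps between finite posets: being joined by a
fence in the pointwise order. -/
def PosetHomotopic {X Y : Type} [Preorder X] [Preorder Y] (f g : X →o Y) : Prop :=
  Relation.ReflTransGen (fun p q : X →o Y => p ≤ q ∨ q ≤ p) f g

/-- Homotopy equivalence of finite posets. -/
def PosetHomotopyEquiv (X Y : Type) [Preorder X] [Preorder Y] : Prop :=
  ∃ (f : X →o Y) (g : Y →o X),
    PosetHomotopic (g.comp f) OrderHom.id ∧ PosetHomotopic (f.comp g) OrderHom.id

/-! ### Classical collapses and n-collapses -/

/-- Elementary (classical) simplicial collapse: removal of a free face `σ`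
together with the unique face `τ` properly containing it. -/
def ElemCollapse (K L : Cplx V) : Prop :=
  ∃ σ τ : Finset V, σ ∈ K.faces ∧ τ ∈ K.faces ∧ σ ⊂ τ ∧
    (∀ ρ ∈ K.faces, σ ⊂ ρ → ρ = τ) ∧ L.faces = K.faces \ {σ, τ}

/-- Classical simplicial collapse. -/
def Collapses : Cplx V → Cplx V → Prop := Relation.ReflTransGen ElemCollapse

/-- A complex is collapsible if it collapses to a point. -/
def Collapsible (K : Cplx V) : Prop := ∃ v, Collapses K (pt v)

/-- `n`-collapses: a `0`-collapse is a strong collapse; an `(n+1)`-collapse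
successively deletes vertices whose links are `n`-collapsible. -/
def NCollapses : ℕ → Cplx V → Cplx V → Prop
  | 0 => StrongCollapses
  | n + 1 => Relation.ReflTransGen
      (fun K L => ∃ v, (∃ w, NCollapses n (linkCplx K v) (pt w)) ∧ L = delete K v)

/-- `K` is `n`-collapsible: it `n`-collapses to a single vertex. -/
def NCollapsible (n : ℕ) (K : Cplx V) : Prop := ∃ v, NCollapses n K (pt v)

/-- `K` is non-evasive: it is `n`-collapsible for some `n`. -/
def NonEvasive (K : Cplx V) : Prop := ∃ n, NCollapsible n K

end


/-! ### Auxiliary lemmas for the proof of stmt3 -/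

section Proofs

variable {V : Type}

lemma vertex_of_mem {K : Cplx V} {σ : Finset V} (hσ : σ ∈ K.faces) {v : V} (hv : v ∈ σ) :
    IsVertex K v :=
  K.down_closed hσ (Finset.singleton_subset_iff.mpr hv) (Finset.singleton_nonempty v)

lemma image_eq_self {K : Cplx V} {f : V → V} (hf : ∀ v, IsVertex K v → f v = v)
    {σ : Finset V} (hσ : σ ∈ K.faces) : σ.image f = σ := by
  have h : Set.EqOn f id ↑σ := fun v hv => hf v (vertex_of_mem hσ hv)
  rw [Finset.image_congr h, Finset.image_id]

lemma mem_link {K : Cplx V} {v : V} {σ : Finset V} :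
    σ ∈ link K v ↔ σ ∈ K.faces ∧ v ∉ σ ∧ insert v σ ∈ K.faces := by
  simp [link]

lemma mem_delete {K : Cplx V} {v : V} {σ : Finset V} :
    σ ∈ (delete K v).faces ↔ σ ∈ K.faces ∧ v ∉ σ := Finset.mem_filter

lemma exists_maximal_face {K : Cplx V} {σ : Finset V} (hσ : σ ∈ K.faces) :
    ∃ τ ∈ K.faces, σ ⊆ τ ∧ ∀ ρ ∈ K.faces, τ ⊆ ρ → τ = ρ := by
  obtain ⟨τ, hτ, hmax⟩ := Finset.exists_max_image (K.faces.filter fun ρ => σ ⊆ ρ)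
    Finset.card ⟨σ, Finset.mem_filter.mpr ⟨hσ, Finset.Subset.refl σ⟩⟩
  rw [Finset.mem_filter] at hτ
  refine ⟨τ, hτ.1, hτ.2, ?_⟩
  intro ρ hρ hsub
  exact Finset.eq_of_subset_of_card_le hsub
    (hmax ρ (Finset.mem_filter.mpr ⟨hρ, hτ.2.trans hsub⟩))

lemma dominatedBy_of_max {K : Cplx V} {v v' : V} (hne : v' ≠ v) (hv : IsVertex K v)
    (h : ∀ σ ∈ K.faces, (∀ ρ ∈ K.faces, σ ⊆ ρ → σ = ρ) → v ∈ σ → v' ∈ σ) :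
    Dominated K v := by
  refine ⟨v', ?_, ?_⟩
  · rw [mem_link]
    obtain ⟨τ, hτf, hsub, hmax⟩ := exists_maximal_face hv
    have hvτ : v ∈ τ := hsub (Finset.mem_singleton_self v)
    have hv'τ : v' ∈ τ := h τ hτf hmax hvτ
    refine ⟨K.down_closed hτf (Finset.singleton_subset_iff.mpr hv'τ)
      (Finset.singleton_nonempty v'), by simp only [Finset.mem_singleton]; exact fun h => hne h.symm, ?_⟩
    refine K.down_closed hτf ?_ ⟨v, Finset.mem_insert_self _ _⟩
    intro x hx
    rcases Finset.mem_insert.mp hx with h1 | h1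
    · exact h1 ▸ hvτ
    · rw [Finset.mem_singleton] at h1; exact h1 ▸ hv'τ
  · intro σ hσ
    rw [mem_link] at hσ ⊢
    obtain ⟨hσf, hvσ, hins⟩ := hσ
    obtain ⟨τ, hτf, hsub, hmax⟩ := exists_maximal_face hins
    have hv'τ : v' ∈ τ := h τ hτf hmax (hsub (Finset.mem_insert_self v σ))
    refine ⟨?_, ?_, ?_⟩
    · refine K.down_closed hτf ?_ ⟨v', Finset.mem_insert_self _ _⟩
      exact Finset.insert_subset_iff.mpr ⟨hv'τ, (Finset.subset_insert v σ).trans hsub⟩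
    · simp only [Finset.mem_insert, not_or]
      exact ⟨fun h => hne h.symm, hvσ⟩
    · refine K.down_closed hτf ?_ ⟨v, Finset.mem_insert_self _ _⟩
      intro x hx
      simp only [Finset.mem_insert] at hx
      rcases hx with h1 | h1 | h1
      · exact h1 ▸ hsub (Finset.mem_insert_self v σ)
      · exact h1 ▸ hv'τ
      · exact hsub (Finset.mem_insert_of_mem h1)

lemma eq_on_vertices_of_contiguous {K : Cplx V} (hK : MinimalCplx K) {f g : V → V}
    (hfg : Contiguous K K f g) (hg : ∀ v, IsVertex K v → g v = v) :
    ∀ v, IsVertex K v → f v = v := by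
  intro v hv
  by_contra hne
  refine hK v (dominatedBy_of_max hne hv ?_)
  intro σ hσ hmax hvσ
  have h1 := hfg σ hσ
  rw [image_eq_self hg hσ] at h1
  have h2 : σ = σ.image f ∪ σ := hmax _ h1 (fun x hx => Finset.mem_union_right _ hx)
  have h3 : f v ∈ σ.image f ∪ σ := Finset.mem_union_left _ (Finset.mem_image_of_mem f hvσ)
  rw [← h2] at h3
  exact h3

lemma contigClass_id_eq {K : Cplx V} (hK : MinimalCplx K) {f : V → V}
    (h : ContigClass K K f id) : ∀ v, IsVertex K v → f v = v := by
  induction h using Relation.ReflTransGen.head_induction_on with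
  | refl => intro v _; rfl
  | head hab _ ih => exact eq_on_vertices_of_contiguous hK hab ih

lemma contiguous_comp_left {K L M : Cplx V} {p q s : V → V} (hs : IsSimplicial L M s)
    (h : Contiguous K L p q) : Contiguous K M (s ∘ p) (s ∘ q) := by
  intro σ hσ
  have h1 := hs _ (h σ hσ)
  rwa [Finset.image_union, Finset.image_image, Finset.image_image] at h1

lemma contiguous_comp_right {K L M : Cplx V} {p q s : V → V} (hs : IsSimplicial K L s)
    (h : Contiguous L M p q) : Contiguous K M (p ∘ s) (q ∘ s) := by
  intro σ hσ
  have h1 := h _ (hs σ hσ)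
  rwa [Finset.image_image, Finset.image_image] at h1

lemma contigClass_comp_left {K L M : Cplx V} {p q s : V → V} (hs : IsSimplicial L M s)
    (h : ContigClass K L p q) : ContigClass K M (s ∘ p) (s ∘ q) :=
  Relation.ReflTransGen.lift (fun r => s ∘ r)
    (fun _ _ hab => contiguous_comp_left hs hab) _ _ h

lemma contigClass_comp_right {K L M : Cplx V} {p q s : V → V} (hs : IsSimplicial K L s)
    (h : ContigClass L M p q) : ContigClass K M (p ∘ s) (q ∘ s) :=
  Relation.ReflTransGen.lift (fun r => r ∘ s)
    (fun _ _ hab => contiguous_comp_right hs hab) _ _ h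

lemma isSimplicial_id (K : Cplx V) : IsSimplicial K K id := fun σ hσ => by
  rwa [Finset.image_id]

lemma strongEquiv_refl (K : Cplx V) : StrongEquiv K K id :=
  ⟨isSimplicial_id K, id, isSimplicial_id K,
    Relation.ReflTransGen.refl, Relation.ReflTransGen.refl⟩

lemma strongEquiv_symm {K L : Cplx V} {f : V → V} (h : StrongEquiv K L f) :
    ∃ g, StrongEquiv L K g := by
  obtain ⟨hf, g, hg, h1, h2⟩ := h
  exact ⟨g, hg, f, hf, h2, h1⟩

lemma strongEquiv_trans {K L M : Cplx V} {f f' : V → V}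
    (h1 : StrongEquiv K L f) (h2 : StrongEquiv L M f') : StrongEquiv K M (f' ∘ f) := by
  obtain ⟨hf, g, hg, hgf, hfg⟩ := h1
  obtain ⟨hf', g', hg', hgf', hfg'⟩ := h2
  refine ⟨fun σ hσ => by rw [show σ.image (f' ∘ f) = (σ.image f).image f' from
      (Finset.image_image).symm]; exact hf' _ (hf σ hσ), g ∘ g',
    fun σ hσ => by rw [show σ.image (g ∘ g') = (σ.image g').image g from
      (Finset.image_image).symm]; exact hg _ (hg' σ hσ), ?_, ?_⟩
  · have c : ContigClass K K (g ∘ ((g' ∘ f') ∘ f)) (g ∘ (id ∘ f)) :=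
      contigClass_comp_left hg (contigClass_comp_right hf hgf')
    have c' : ContigClass K K ((g ∘ g') ∘ (f' ∘ f)) (g ∘ f) := c
    exact c'.trans hgf
  · have c : ContigClass M M (f' ∘ ((f ∘ g) ∘ g')) (f' ∘ (id ∘ g')) :=
      contigClass_comp_left hf' (contigClass_comp_right hg' hfg)
    have c' : ContigClass M M ((f' ∘ f) ∘ (g ∘ g')) (f' ∘ g') := c
    exact c'.trans hfg'

lemma strongEquiv_delete {K : Cplx V} {v : V} (hd : Dominated K v) :
    ∃ r, StrongEquiv K (delete K v) r := by
  obtain ⟨v', hv'1, hv'2⟩ := hd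
  have hvv' : v ∉ ({v'} : Finset V) := (mem_link.mp hv'1).2.1
  have hne : v' ≠ v := fun h => hvv' (by simp [h])
  set r : V → V := fun w => if w = v then v' else w with hr
  have key : ∀ σ ∈ K.faces, v ∈ σ → insert v' (σ.erase v) ∈ link K v := by
    intro σ hσ hvσ
    rcases Finset.eq_empty_or_nonempty (σ.erase v) with h0 | h1
    · rw [h0]; simpa using hv'1
    · apply hv'2
      rw [mem_link]
      exact ⟨K.down_closed hσ (Finset.erase_subset v σ) h1, Finset.notMem_erase v σ,
        by rwa [Finset.insert_erase hvσ]⟩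
  have himg : ∀ σ : Finset V, v ∈ σ → σ.image r = insert v' (σ.erase v) := by
    intro σ hvσ
    ext x
    simp only [Finset.mem_image, Finset.mem_insert, Finset.mem_erase, hr]
    constructor
    · rintro ⟨w, hw, rfl⟩
      by_cases h : w = v
      · rw [if_pos h]; exact Or.inl rfl
      · rw [if_neg h]; exact Or.inr ⟨h, hw⟩
    · rintro (rfl | ⟨hx, hxσ⟩)
      · exact ⟨v, hvσ, if_pos rfl⟩
      · exact ⟨x, hxσ, if_neg hx⟩
  have himg2 : ∀ σ : Finset V, v ∉ σ → σ.image r = σ := by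
    intro σ h
    have heq : Set.EqOn r id ↑σ := by
      intro w hw
      have : w ≠ v := fun e => h (e ▸ hw)
      simp only [hr, if_neg this, id]
    rw [Finset.image_congr heq, Finset.image_id]
  have hins : ∀ σ ∈ K.faces, v ∈ σ → insert v' σ ∈ K.faces := by
    intro σ hσ hvσ
    have h2 := (mem_link.mp (key σ hσ hvσ)).2.2
    have he : insert v (insert v' (σ.erase v)) = insert v' σ := by
      ext x
      by_cases hx : x = v <;>
        simp [Finset.mem_insert, Finset.mem_erase, hx, hvσ]
    rwa [he] at h2
  have hrs : IsSimplicial K (delete K v) r := by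
    intro σ hσ
    by_cases hvσ : v ∈ σ
    · rw [himg σ hvσ]
      have hl := mem_link.mp (key σ hσ hvσ)
      refine mem_delete.mpr ⟨hl.1, ?_⟩
      simp only [Finset.mem_insert, not_or]
      exact ⟨fun h => hne h.symm, Finset.notMem_erase v σ⟩
    · rw [himg2 σ hvσ]
      exact mem_delete.mpr ⟨hσ, hvσ⟩
  have crid : Contiguous K K r id := by
    intro σ hσ
    rw [Finset.image_id]
    by_cases hvσ : v ∈ σ
    · rw [himg σ hvσ]
      have he : insert v' (σ.erase v) ∪ σ = insert v' σ := by
        ext x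
        by_cases hx : x = v <;>
          simp [Finset.mem_insert, Finset.mem_erase, hx, hvσ]
      rw [he]
      exact hins σ hσ hvσ
    · rw [himg2 σ hvσ, Finset.union_self]
      exact hσ
  have crid2 : Contiguous (delete K v) (delete K v) r id := by
    intro σ hσ
    obtain ⟨h1, h2⟩ := mem_delete.mp hσ
    rw [Finset.image_id, himg2 σ h2, Finset.union_self]
    exact hσ
  refine ⟨r, hrs, id, ?_, ?_, ?_⟩
  · intro σ hσ
    rw [Finset.image_id]
    exact (mem_delete.mp hσ).1
  · exact Relation.ReflTransGen.single crid
  · exact Relation.ReflTransGen.single crid2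

lemma iso_inverse {K L : Cplx V} {f : V → V} (h : IsIsoMap K L f) :
    ∃ g : V → V, IsSimplicial L K g ∧ (∀ v, IsVertex K v → g (f v) = v) ∧
      (∀ w, IsVertex L w → f (g w) = w) := by
  obtain ⟨hf, hinj, hsurj⟩ := h
  classical
  refine ⟨fun w => if hw : ∃ u, IsVertex K u ∧ f u = w then hw.choose else w, ?_, ?_, ?_⟩
  all_goals
    set g : V → V := fun w => if hw : ∃ u, IsVertex K u ∧ f u = w then hw.choose else w
      with hg
  case refine_2 =>
    intro v hv
    have hex : ∃ u, IsVertex K u ∧ f u = f v := ⟨v, hv, rfl⟩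
    have hspec := hex.choose_spec
    have : g (f v) = hex.choose := by simp only [hg, dif_pos hex]
    rw [this]
    exact hinj hspec.1 hv hspec.2
  case refine_3 =>
    intro w hw
    have : ∃ u, IsVertex K u ∧ f u = w := by
      have hmem : ({w} : Finset V) ∈ K.faces.image (fun σ => σ.image f) := by
        rw [hsurj]; exact hw
      rw [Finset.mem_image] at hmem
      obtain ⟨σ, hσ, hσw⟩ := hmem
      obtain ⟨u, hu⟩ := K.nonempty_of_mem hσ
      have : f u ∈ σ.image f := Finset.mem_image_of_mem f hu
      rw [hσw, Finset.mem_singleton] at this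
      exact ⟨u, vertex_of_mem hσ hu, this⟩
    have hspec := this.choose_spec
    have hgw : g w = this.choose := by simp only [hg, dif_pos this]
    rw [hgw]
    exact hspec.2
  case refine_1 =>
    intro τ hτ
    have hmem : τ ∈ K.faces.image (fun σ => σ.image f) := by rw [hsurj]; exact hτ
    rw [Finset.mem_image] at hmem
    obtain ⟨σ, hσ, rfl⟩ := hmem
    have heq : (σ.image f).image g = σ := by
      rw [Finset.image_image]
      have h1 : Set.EqOn (g ∘ f) id ↑σ := by
        intro u hu
        show g (f u) = u
        have hv : IsVertex K u := vertex_of_mem hσ hu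
        have hex : ∃ u', IsVertex K u' ∧ f u' = f u := ⟨u, hv, rfl⟩
        have hspec := hex.choose_spec
        have : g (f u) = hex.choose := by simp only [hg, dif_pos hex]
        rw [this]
        exact hinj hspec.1 hv hspec.2
      rw [Finset.image_congr h1, Finset.image_id]
    rw [heq]
    exact hσ

lemma strongEquiv_of_iso {K L : Cplx V} (h : Isomorphic K L) : ∃ f, StrongEquiv K L f := by
  obtain ⟨f, hiso⟩ := h
  obtain ⟨g, hgs, hgf, hfg⟩ := iso_inverse hiso
  refine ⟨f, hiso.1, g, hgs, ?_, ?_⟩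
  · refine Relation.ReflTransGen.single ?_
    intro σ hσ
    have h1 : σ.image (g ∘ f) = σ := by
      have he : Set.EqOn (g ∘ f) id ↑σ := fun u hu => hgf u (vertex_of_mem hσ hu)
      rw [Finset.image_congr he, Finset.image_id]
    rw [h1, Finset.image_id, Finset.union_self]
    exact hσ
  · refine Relation.ReflTransGen.single ?_
    intro τ hτ
    have h1 : τ.image (f ∘ g) = τ := by
      have he : Set.EqOn (f ∘ g) id ↑τ := fun w hw => hfg w (vertex_of_mem hτ hw)
      rw [Finset.image_congr he, Finset.image_id]
    rw [h1, Finset.image_id, Finset.union_self]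
    exact hτ

lemma iso_symm {K L : Cplx V} (h : Isomorphic K L) : Isomorphic L K := by
  obtain ⟨f, hiso⟩ := h
  obtain ⟨g, hgs, hgf, hfg⟩ := iso_inverse hiso
  refine ⟨g, hgs, ?_, ?_⟩
  · intro w hw w' hw' he
    calc w = f (g w) := (hfg w hw).symm
    _ = f (g w') := by rw [he]
    _ = w' := hfg w' hw'
  · apply Finset.Subset.antisymm
    · intro σ hσ
      rw [Finset.mem_image] at hσ
      obtain ⟨τ, hτ, rfl⟩ := hσ
      exact hgs τ hτ
    · intro σ hσ
      rw [Finset.mem_image]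
      refine ⟨σ.image f, hiso.1 σ hσ, ?_⟩
      rw [Finset.image_image]
      exact (Finset.image_congr (fun u hu => hgf u (vertex_of_mem hσ hu))).trans
        Finset.image_id

lemma iso_of_strongEquiv_minimal {K L : Cplx V} (hK : MinimalCplx K) (hL : MinimalCplx L)
    {f : V → V} (h : StrongEquiv K L f) : Isomorphic K L := by
  obtain ⟨hf, g, hg, hgf, hfg⟩ := h
  have h1 : ∀ v, IsVertex K v → g (f v) = v := fun v hv => contigClass_id_eq hK hgf v hv
  have h2 : ∀ w, IsVertex L w → f (g w) = w := fun w hw => contigClass_id_eq hL hfg w hw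
  refine ⟨f, hf, ?_, ?_⟩
  · intro v hv v' hv' he
    calc v = g (f v) := (h1 v hv).symm
    _ = g (f v') := by rw [he]
    _ = v' := h1 v' hv'
  · apply Finset.Subset.antisymm
    · intro τ hτ
      rw [Finset.mem_image] at hτ
      obtain ⟨σ, hσ, rfl⟩ := hτ
      exact hf σ hσ
    · intro τ hτ
      rw [Finset.mem_image]
      refine ⟨τ.image g, hg τ hτ, ?_⟩
      rw [Finset.image_image]
      exact (Finset.image_congr (fun w hw => h2 w (vertex_of_mem hτ hw))).trans
        Finset.image_id

lemma strongEquiv_of_collapses {K L : Cplx V} (h : StrongCollapses K L) :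
    ∃ f, StrongEquiv K L f := by
  induction h with
  | refl => exact ⟨id, strongEquiv_refl K⟩
  | tail _ hbc ih =>
    obtain ⟨f, hf⟩ := ih
    obtain ⟨v, hd, rfl⟩ := hbc
    obtain ⟨r, hr⟩ := strongEquiv_delete hd
    exact ⟨r ∘ f, strongEquiv_trans hf hr⟩

lemma strongEquiv_of_sameSHT {K L : Cplx V} (h : SameSHT K L) : ∃ f, StrongEquiv K L f := by
  induction h with
  | refl => exact ⟨id, strongEquiv_refl K⟩
  | tail _ hbc ih =>
    obtain ⟨f, hf⟩ := ih
    rcases hbc with h | h | h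
    · obtain ⟨v, hd, rfl⟩ := h
      obtain ⟨r, hr⟩ := strongEquiv_delete hd
      exact ⟨r ∘ f, strongEquiv_trans hf hr⟩
    · obtain ⟨v, hd, heq⟩ := h
      obtain ⟨r, hr⟩ := strongEquiv_delete hd
      rw [← heq] at hr
      obtain ⟨s, hs⟩ := strongEquiv_symm hr
      exact ⟨s ∘ f, strongEquiv_trans hf hs⟩
    · obtain ⟨r, hr⟩ := strongEquiv_of_iso h
      exact ⟨r ∘ f, strongEquiv_trans hf hr⟩

lemma sameSHT_symm {K L : Cplx V} (h : SameSHT K L) : SameSHT L K := by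
  induction h with
  | refl => exact Relation.ReflTransGen.refl
  | tail _ hbc ih =>
    refine Relation.ReflTransGen.head ?_ ih
    rcases hbc with h | h | h
    · exact Or.inr (Or.inl h)
    · exact Or.inl h
    · exact Or.inr (Or.inr (iso_symm h))

lemma exists_core' (K : Cplx V) : ∃ K₀, IsCore K K₀ := by
  generalize hn : K.faces.card = n
  induction n using Nat.strong_induction_on generalizing K with
  | _ n ih =>
    by_cases hmin : MinimalCplx K
    · exact ⟨K, hmin, Relation.ReflTransGen.refl⟩
    · simp only [MinimalCplx, not_forall, not_not] at hmin
      obtain ⟨v, hv⟩ := hmin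
      have hvv : ({v} : Finset V) ∈ K.faces := by
        obtain ⟨a, ha, -⟩ := hv
        have h2 := (mem_link.mp ha).2.2
        exact K.down_closed h2 (Finset.singleton_subset_iff.mpr (Finset.mem_insert_self v _))
          (Finset.singleton_nonempty v)
      have hcard : (delete K v).faces.card < n := by
        rw [← hn]
        apply Finset.card_lt_card
        rw [Finset.ssubset_iff_of_subset (fun σ hσ => (mem_delete.mp hσ).1)]
        exact ⟨{v}, hvv, fun hmem => (mem_delete.mp hmem).2 (Finset.mem_singleton_self v)⟩
      obtain ⟨K₀, hK₀min, hK₀col⟩ := ih _ hcard (delete K v) rfl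
      exact ⟨K₀, hK₀min, Relation.ReflTransGen.head ⟨v, hv, rfl⟩ hK₀col⟩

lemma main_iff {K L K₀ L₀ : Cplx V} (hK : IsCore K K₀) (hL : IsCore L L₀) :
    SameSHT K L ↔ Isomorphic K₀ L₀ := by
  constructor
  · intro h
    obtain ⟨f1, h1⟩ := strongEquiv_of_collapses hK.2
    obtain ⟨f1', h1'⟩ := strongEquiv_symm h1
    obtain ⟨f2, h2⟩ := strongEquiv_of_sameSHT h
    obtain ⟨f3, h3⟩ := strongEquiv_of_collapses hL.2
    exact iso_of_strongEquiv_minimal hK.1 hL.1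
      (strongEquiv_trans (strongEquiv_trans h1' h2) h3)
  · intro h
    have c1 : SameSHT K K₀ :=
      Relation.ReflTransGen.mono (fun _ _ hab => Or.inl hab) _ _ hK.2
    have c2 : SameSHT K₀ L₀ := Relation.ReflTransGen.single (Or.inr (Or.inr h))
    have c3 : SameSHT L L₀ :=
      Relation.ReflTransGen.mono (fun _ _ hab => Or.inl hab) _ _ hL.2
    exact (c1.trans c2).trans (sameSHT_symm c3)

end Proofs

/-- every complex has a core; cores are unique up to isomorphism;
two complexes have the same strong homotopy type iff their cores are isomorphic. -/
theorem stmt3 {V : Type} :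
    (∀ K : Cplx V, ∃ K₀, IsCore K K₀) ∧
    (∀ K K₀ K₁ : Cplx V, IsCore K K₀ → IsCore K K₁ → Isomorphic K₀ K₁) ∧
    (∀ K L K₀ L₀ : Cplx V, IsCore K K₀ → IsCore L L₀ →
      (SameSHT K L ↔ Isomorphic K₀ L₀)) := by
  refine ⟨exists_core', ?_, fun K L K₀ L₀ hK hL => main_iff hK hL⟩
  intro K K₀ K₁ h0 h1
  exact (main_iff h0 h1).mp Relation.ReflTransGen.refl

end StrongHomotopy
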